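/- arXiv:1301.7057 — 4 statements merged into one kernel-verified Lean document; each statement's English description precedes it below -/
import Mathlib

section
/- Let f : I ⊂ ℝ → ℝ be a differentiable mapping on the interior I° of an interval I, let a, b ∈ I° with a < b, and suppose the derivative f' is integrable on [a,b]. Then (f(a)+f(b))/2 − (1/(b−a))·∫_a^b f(x) dx = ((b−a)/2)·∫_0^1 ∫_0^1 [f'(t·a+(1−t)·b) − f'(s·a+(1−s)·b)]·(s−t) dt ds. -/
open MeasureTheory Real Set intervalIntegral

/-!
With `g t = f' (t * a + (1 - t) * b)`, the inner integral equals
`s ∫₀¹ g - ∫₀¹ t g t dt - (s - 1/2) g s`, so the double integral collapses to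
`∫₀¹ (1 - 2t) g t dt` without any use of Fubini. The substitution `x = t * a + (1 - t) * b`
turns this into `(b - a)⁻² ∫ₐᵇ (2x - a - b) f' x dx`, and integrating by parts against the
weight `2x - a - b`, which equals `∓(b - a)` at the endpoints, gives
`(b - a) (f a + f b) - 2 ∫ₐᵇ f`.
-/

theorem intervalIntegrable_comp_convex_comb {h : ℝ → ℝ} {a b : ℝ}
    (hh : IntervalIntegrable h volume a b) :
    IntervalIntegrable (fun t => h (t * a + (1 - t) * b)) volume 0 1 := by
  rcases eq_or_ne a b with rfl | hab
  · simp [← add_mul]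
  have h' := (hh.symm.comp_add_right b).comp_mul_left (c := a - b)
  rw [sub_self, zero_div, div_self (sub_ne_zero.2 hab)] at h'
  convert h' using 3 with t
  ring

theorem integral_comp_convex_comb (h : ℝ → ℝ) {a b : ℝ} (hab : a ≠ b) :
    ∫ t in (0:ℝ)..1, h (t * a + (1 - t) * b) = (b - a)⁻¹ * ∫ x in a..b, h x := by
  have hc : a - b ≠ 0 := sub_ne_zero.2 hab
  calc ∫ t in (0:ℝ)..1, h (t * a + (1 - t) * b)
      = ∫ t in (0:ℝ)..1, h ((a - b) * t + b) := by congr! 3 with t; ring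
    _ = (a - b)⁻¹ * ∫ x in b..a, h x := by
      rw [integral_comp_mul_add h hc, smul_eq_mul]; simp
    _ = (b - a)⁻¹ * ∫ x in a..b, h x := by
      rw [integral_symm a b, ← neg_sub b a, inv_neg, neg_mul_neg]

theorem integral_zero_one_mul_add (c d : ℝ) : ∫ x in (0:ℝ)..1, (c * x + d) = c / 2 + d := by
  rw [integral_add (intervalIntegrable_id.const_mul c) intervalIntegrable_const,
    intervalIntegral.integral_const_mul, integral_id, intervalIntegral.integral_const]
  norm_num
  ring

theorem intervalIntegrable_mul_add (c d a b : ℝ) :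
    IntervalIntegrable (fun x => c * x + d) volume a b :=
  (by fun_prop : Continuous fun x : ℝ => c * x + d).intervalIntegrable a b

theorem integral_integral_sub_mul_sub {g : ℝ → ℝ} (hg : IntervalIntegrable g volume 0 1) :
    ∫ s in (0:ℝ)..1, ∫ t in (0:ℝ)..1, (g t - g s) * (s - t) =
      ∫ t in (0:ℝ)..1, (1 - 2 * t) * g t := by
  have htg : IntervalIntegrable (fun t => t * g t) volume 0 1 :=
    hg.continuousOn_mul continuousOn_id
  set A := ∫ t in (0:ℝ)..1, g t
  set B := ∫ t in (0:ℝ)..1, t * g t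
  have hinner : ∀ s, ∫ t in (0:ℝ)..1, (g t - g s) * (s - t) =
      (A * s + -B) - (s * g s - 2⁻¹ * g s) := by
    intro s
    have hexp : ∀ t, (g t - g s) * (s - t) = (s * g t - t * g t) + (g s * t + -(g s * s)) :=
      fun t => by ring
    simp_rw [hexp]
    rw [integral_add ((hg.const_mul s).sub htg) (intervalIntegrable_mul_add _ _ _ _),
      integral_sub (hg.const_mul s) htg, intervalIntegral.integral_const_mul,
      integral_zero_one_mul_add]
    ring
  have hrhs : ∀ t, (1 - 2 * t) * g t = g t - 2 * (t * g t) := fun t => by ring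
  rw [integral_congr (fun s _ => hinner s), funext hrhs,
    integral_sub (intervalIntegrable_mul_add _ _ _ _) (htg.sub (hg.const_mul _)),
    integral_zero_one_mul_add, integral_sub htg (hg.const_mul _),
    integral_sub hg (htg.const_mul 2), intervalIntegral.integral_const_mul,
    intervalIntegral.integral_const_mul]
  ring

theorem integral_two_mul_sub_mul_deriv {f f' : ℝ → ℝ} {a b : ℝ}
    (hf : ∀ x ∈ uIcc a b, HasDerivAt f (f' x) x) (hf' : IntervalIntegrable f' volume a b) :
    ∫ x in a..b, (2 * x - a - b) * f' x = (b - a) * (f a + f b) - 2 * ∫ x in a..b, f x := by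
  have hfc : ContinuousOn f (uIcc a b) := fun x hx => (hf x hx).continuousAt.continuousWithinAt
  have hu : ∀ x, HasDerivAt (fun x => 2 * x - a - b) 2 x := fun x =>
    (((hasDerivAt_id x).const_mul 2).sub_const a).sub_const b |>.congr_deriv (mul_one 2)
  rw [integral_mul_deriv_eq_deriv_mul_of_hasDerivAt (by fun_prop) hfc (fun x _ => hu x)
      (fun x hx => hf x (Ioo_subset_Icc_self hx)) intervalIntegrable_const hf',
    intervalIntegral.integral_const_mul]
  ring

theorem stmt0
    (I : Set ℝ) (hIconn : Set.OrdConnected I)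
    (f f' : ℝ → ℝ)
    (hderiv : ∀ x ∈ interior I, HasDerivAt f (f' x) x)
    (a b : ℝ) (haI : a ∈ interior I) (hbI : b ∈ interior I) (hab : a < b)
    (hint : IntervalIntegrable f' MeasureTheory.volume a b) :
    (f a + f b) / 2 - (1 / (b - a)) * ∫ x in a..b, f x =
      (b - a) / 2 *
        ∫ s in (0:ℝ)..1, ∫ t in (0:ℝ)..1,
          (f' (t * a + (1 - t) * b) - f' (s * a + (1 - s) * b)) * (s - t) := by
  have hf : ∀ x ∈ uIcc a b, HasDerivAt f (f' x) x :=
    fun x hx => hderiv x (hIconn.interior.uIcc_subset haI hbI hx)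
  have hba : b - a ≠ 0 := sub_ne_zero.2 hab.ne'
  have hweight : ∀ t : ℝ, (1 - 2 * t) * f' (t * a + (1 - t) * b) =
      (fun x => (2 * x - a - b) / (b - a) * f' x) (t * a + (1 - t) * b) := by
    intro t; field_simp; ring
  rw [integral_integral_sub_mul_sub (intervalIntegrable_comp_convex_comb hint),
    integral_congr (fun t _ => hweight t),
    integral_comp_convex_comb (fun x => (2 * x - a - b) / (b - a) * f' x) hab.ne]
  simp_rw [div_mul_eq_mul_div, intervalIntegral.integral_div,
    integral_two_mul_sub_mul_deriv hf hint]
  field_simp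
end

section
/- Let I ⊃ [0,∞) be an open interval and let f : I → (0,∞) be differentiable on I with f' integrable on (a,b), where 0 ≤ a < b < ∞. Suppose |f'| is (α,m)-logarithmically convex on [0, b/m] for some (α,m) ∈ (0,1]×(0,1], and set η = |f'(a)| / |f'(b/m)|^m. Then: if η = 1, |(f(a)+f(b))/2 − (1/(b−a))·∫_a^b f(x) dx| ≤ ((b−a)/3)·|f'(b/m)|^m; and if η < 1, |(f(a)+f(b))/2 − (1/(b−a))·∫_a^b f(x) dx| ≤ ((b−a)/2)·|f'(b/m)|^m·(−α²·(ln η)² − 2α·ln η + 2η^α − 2)/(α³·(ln η)³). -/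
/-!
Integration by parts turns the trapezoid error into `(1 / (b - a)) ∫ₐᵇ (x - c) f' x`, `c` the
midpoint. Log-convexity between `a` and `b / m` gives `|f' x| ≤ M η ^ (α (b - x) / (b - a))` with
`M = |f' (b / m)| ^ m`, a bound increasing in `x`. If `f'` vanishes somewhere on `[0, b / m]`,
log-convexity forces `f' = 0` on `(0, b)`; otherwise Darboux's theorem gives `f'` a constant sign
on `(a, b)`. Then the two halves of `[a, b]` contribute with opposite signs, and reflecting through
`c` bounds each of them by `∫_c^b (x - c) M η ^ (α (b - x) / (b - a))`, which is computed in closed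
form. The last comparison is `exp k - 1 ≤ k exp (k / 2)` for `k ≤ 0`, i.e. `sinh (k / 2) ≤ k / 2`.
-/

open MeasureTheory Real Set intervalIntegral

def AlphaMLogConvexOn (α m B : ℝ) (g : ℝ → ℝ) : Prop :=
  ∀ x ∈ Icc 0 B, ∀ y ∈ Icc 0 B, ∀ t ∈ Icc (0 : ℝ) 1,
    g (t * x + m * (1 - t) * y) ≤ g x ^ t ^ α * g y ^ (m * (1 - t ^ α))

theorem mul_rpow_mul_rpow_le_mul_exp {η M α t : ℝ} (hM : 0 < M) (hη0 : 0 < η) (hη1 : η ≤ 1)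
    (hα : α ≤ 1) (ht : t ∈ Icc (0 : ℝ) 1) :
    (η * M) ^ t ^ α * M ^ (1 - t ^ α) ≤ M * exp (α * log η * t) := by
  have hsplit : (η * M) ^ t ^ α * M ^ (1 - t ^ α) = M * η ^ t ^ α := by
    rw [mul_rpow hη0.le hM.le, mul_assoc, ← rpow_add hM, add_sub_cancel, rpow_one, mul_comm]
  have hαt : α * t ≤ t ^ α := by
    rcases ht.1.eq_or_lt with rfl | ht0
    · simpa using rpow_nonneg le_rfl α
    · calc α * t ≤ t := by nlinarith [ht.1]
        _ = t ^ (1 : ℝ) := (rpow_one t).symm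
        _ ≤ t ^ α := rpow_le_rpow_of_exponent_ge ht0 ht.2 hα
  rw [hsplit, rpow_def_of_pos hη0]
  gcongr M * exp ?_
  nlinarith [log_nonpos hη0.le hη1]

namespace AlphaMLogConvexOn

variable {α m : ℝ} {g : ℝ → ℝ}

theorem eq_zero_of_eq_zero {b : ℝ} (hg : AlphaMLogConvexOn α m (b / m) g) (hg0 : ∀ x, 0 ≤ g x)
    (hm : m ∈ Ioc 0 1) {p : ℝ} (hp : p ∈ Icc 0 (b / m)) (hgp : g p = 0) {z : ℝ}
    (hz : z ∈ Ioo 0 b) : g z = 0 := by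
  obtain ⟨hm0, hm1⟩ := hm
  set B := b / m
  obtain ⟨hz0, hzB⟩ : 0 < z ∧ z < m * B := by rwa [mul_div_cancel₀ _ hm0.ne']
  have hB : 0 < B := pos_of_mul_pos_right (hz0.trans hzB) hm0.le
  -- `z = t * p + m * (1 - t) * y` with `t > 0` and `y ∈ [0, B]`, so the factor `g p ^ t ^ α = 0`
  -- kills the log-convexity bound at `z`
  set r := min z (m * B - z)
  have hr : 0 < r := lt_min hz0 (by linarith)
  have hrz : r ≤ z := min_le_left _ _
  have hrB : r ≤ m * B - z := min_le_right _ _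
  set t := r / (2 * B)
  have ht0 : 0 < t := by positivity
  have htB : t * B = r / 2 := by simp only [t]; field_simp
  have ht1 : t < 1 := by nlinarith
  have htp : t * p ≤ r / 2 := htB ▸ mul_le_mul_of_nonneg_left hp.2 ht0.le
  set y := (z - t * p) / (m * (1 - t))
  have hy0 : 0 ≤ y := div_nonneg (by linarith [mul_nonneg ht0.le hp.1]) (by nlinarith)
  have hyB : y ≤ B := by
    rw [div_le_iff₀ (by nlinarith)]
    nlinarith [mul_nonneg ht0.le hp.1]
  have hzeq : t * p + m * (1 - t) * y = z := by
    rw [mul_div_cancel₀ _ (by nlinarith : m * (1 - t) ≠ 0)]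
    ring
  have h := hg p hp y ⟨hy0, hyB⟩ t ⟨ht0.le, ht1.le⟩
  rw [hzeq, hgp, zero_rpow (rpow_pos_of_pos ht0 α).ne', zero_mul] at h
  exact le_antisymm h (hg0 z)

theorem le_mul_exp {a b η : ℝ} (hg : AlphaMLogConvexOn α m (b / m) g) (hg0 : ∀ x, 0 ≤ g x)
    (hm : m ∈ Ioc 0 1) (hα : α ≤ 1) (ha : 0 ≤ a) (hab : a < b)
    (hη : η = g a / g (b / m) ^ m) (hη0 : 0 < η) (hη1 : η ≤ 1) {x : ℝ} (hx : x ∈ Icc a b) :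
    g x ≤ g (b / m) ^ m * exp (α * log η * ((b - x) / (b - a))) := by
  have hba : 0 < b - a := sub_pos.2 hab
  have hbm : b ≤ b / m := le_div_self (ha.trans hab.le) hm.1 hm.2
  have hM : 0 < g (b / m) ^ m :=
    (rpow_nonneg (hg0 _) m).lt_of_ne fun h => by simp [hη, ← h] at hη0
  have ht : (b - x) / (b - a) ∈ Icc (0 : ℝ) 1 :=
    ⟨div_nonneg (by linarith [hx.2]) hba.le, (div_le_one hba).2 (by linarith [hx.1])⟩
  have hxeq : (b - x) / (b - a) * a + m * (1 - (b - x) / (b - a)) * (b / m) = x := by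
    field_simp [hm.1.ne']; ring
  have h := hg a ⟨ha, hab.le.trans hbm⟩ (b / m) ⟨(ha.trans hab.le).trans hbm, le_rfl⟩ _ ht
  have hga : g a = η * g (b / m) ^ m := by rw [hη, div_mul_cancel₀ _ hM.ne']
  rw [hxeq, rpow_mul (hg0 _), hga] at h
  exact h.trans (mul_rpow_mul_rpow_le_mul_exp hM hη0 hη1 hα ht)

end AlphaMLogConvexOn

theorem trapezoid_sub_average_eq {f f' : ℝ → ℝ} {a b : ℝ} (hab : a ≠ b)
    (hf : ∀ x ∈ uIcc a b, HasDerivAt f (f' x) x) (hf' : IntervalIntegrable f' volume a b) :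
    (f a + f b) / 2 - 1 / (b - a) * ∫ x in a..b, f x =
      (∫ x in a..b, (x - (a + b) / 2) * f' x) / (b - a) := by
  rw [integral_mul_deriv_eq_deriv_mul (u := fun x => x - (a + b) / 2)
    (fun x _ => (hasDerivAt_id x).sub_const _) hf intervalIntegrable_const hf']
  simp only [one_mul]
  field_simp [sub_ne_zero.2 hab.symm]
  ring

theorem integral_sub_midpoint_mul_comp_sub_eq_neg (g : ℝ → ℝ) (a b : ℝ) :
    ∫ x in a..(a + b) / 2, (x - (a + b) / 2) * g (a + b - x) =
      -∫ x in (a + b) / 2..b, (x - (a + b) / 2) * g x := by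
  have h := integral_comp_sub_left (fun y => -((y - (a + b) / 2) * g y)) (a + b)
    (a := a) (b := (a + b) / 2)
  rw [show a + b - (a + b) / 2 = (a + b) / 2 by ring, add_sub_cancel_left] at h
  rw [← intervalIntegral.integral_neg, ← h]
  exact integral_congr fun x _ => by ring

theorem abs_integral_sub_midpoint_mul_le_of_nonneg {φ g : ℝ → ℝ} {a b : ℝ} (hab : a ≤ b)
    (hφ : IntervalIntegrable φ volume a b) (hφ0 : ∀ x ∈ Ioo a b, 0 ≤ φ x)
    (hφg : ∀ x ∈ Ioo a b, φ x ≤ g x) (hg : MonotoneOn g (Icc a b)) :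
    |∫ x in a..b, (x - (a + b) / 2) * φ x| ≤ ∫ x in (a + b) / 2..b, (x - (a + b) / 2) * g x := by
  set c := (a + b) / 2 with hc
  have hac : a ≤ c := by linarith
  have hcb : c ≤ b := by linarith
  have hc_mem : c ∈ uIcc a b := by rw [uIcc_of_le hab]; exact ⟨hac, hcb⟩
  have hlin : ContinuousOn (fun x : ℝ => x - c) (uIcc a b) := by fun_prop
  have hφi : IntervalIntegrable (fun x => (x - c) * φ x) volume a b := hφ.continuousOn_mul hlin
  have hgi : IntervalIntegrable (fun x => (x - c) * g x) volume a b :=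
    (MonotoneOn.intervalIntegrable (by rwa [uIcc_of_le hab])).continuousOn_mul hlin
  have hgr : IntervalIntegrable (fun x => (x - c) * g (a + b - x)) volume a b := by
    refine (AntitoneOn.intervalIntegrable ?_).continuousOn_mul hlin
    rw [uIcc_of_le hab]
    intro x hx y hy hxy
    exact hg ⟨by linarith [hy.2], by linarith [hy.1]⟩ ⟨by linarith [hx.2], by linarith [hx.1]⟩
      (by linarith)
  have hreflect := integral_sub_midpoint_mul_comp_sub_eq_neg g a b
  have hac_sub := uIcc_subset_uIcc_left hc_mem
  have hcb_sub := uIcc_subset_uIcc_right hc_mem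
  have hleft_le : ∫ x in a..c, (x - c) * φ x ≤ 0 := by
    simpa using integral_mono_on_of_le_Ioo hac (hφi.mono_set hac_sub) intervalIntegrable_const
      fun x hx => mul_nonpos_of_nonpos_of_nonneg (by linarith [hx.2])
        (hφ0 x ⟨hx.1, hx.2.trans_le hcb⟩)
  have hleft_ge : ∫ x in a..c, (x - c) * g (a + b - x) ≤ ∫ x in a..c, (x - c) * φ x := by
    refine integral_mono_on_of_le_Ioo hac (hgr.mono_set hac_sub) (hφi.mono_set hac_sub)
      fun x hx => mul_le_mul_of_nonpos_left ?_ (by linarith [hx.2])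
    exact (hφg x ⟨hx.1, hx.2.trans_le hcb⟩).trans (hg ⟨hx.1.le, by linarith [hx.2]⟩
      ⟨by linarith [hx.2], by linarith [hx.1]⟩ (by linarith [hx.2]))
  have hright_nonneg : 0 ≤ ∫ x in c..b, (x - c) * φ x := by
    simpa using integral_mono_on_of_le_Ioo hcb intervalIntegrable_const (hφi.mono_set hcb_sub)
      fun x hx => mul_nonneg (by linarith [hx.1]) (hφ0 x ⟨hac.trans_lt hx.1, hx.2⟩)
  have hright_le : ∫ x in c..b, (x - c) * φ x ≤ ∫ x in c..b, (x - c) * g x :=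
    integral_mono_on_of_le_Ioo hcb (hφi.mono_set hcb_sub) (hgi.mono_set hcb_sub)
      fun x hx => mul_le_mul_of_nonneg_left (hφg x ⟨hac.trans_lt hx.1, hx.2⟩) (by linarith [hx.1])
  rw [← integral_add_adjacent_intervals (hφi.mono_set hac_sub) (hφi.mono_set hcb_sub), abs_le]
  constructor <;> linarith

theorem abs_integral_sub_midpoint_mul_le {φ g : ℝ → ℝ} {a b : ℝ} (hab : a ≤ b)
    (hφ : IntervalIntegrable φ volume a b)
    (hsign : (∀ x ∈ Ioo a b, 0 ≤ φ x) ∨ ∀ x ∈ Ioo a b, φ x ≤ 0)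
    (hφg : ∀ x ∈ Ioo a b, |φ x| ≤ g x) (hg : MonotoneOn g (Icc a b)) :
    |∫ x in a..b, (x - (a + b) / 2) * φ x| ≤ ∫ x in (a + b) / 2..b, (x - (a + b) / 2) * g x := by
  rcases hsign with hφ0 | hφ0
  · exact abs_integral_sub_midpoint_mul_le_of_nonneg hab hφ hφ0
      (fun x hx => (le_abs_self _).trans (hφg x hx)) hg
  · simpa only [Pi.neg_apply, mul_neg, intervalIntegral.integral_neg, abs_neg] using
      abs_integral_sub_midpoint_mul_le_of_nonneg hab hφ.neg (fun x hx => neg_nonneg.2 (hφ0 x hx))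
        (fun x hx => (neg_le_abs _).trans (hφg x hx)) hg

theorem integral_sub_midpoint (a b : ℝ) :
    ∫ x in (a + b) / 2..b, (x - (a + b) / 2) = (b - a) ^ 2 / 8 := by
  rw [intervalIntegral.integral_comp_sub_right (fun x => x), integral_id]
  ring

theorem integral_sub_midpoint_mul_exp {a b k : ℝ} (hab : a ≠ b) (hk : k ≠ 0) :
    ∫ x in (a + b) / 2..b, (x - (a + b) / 2) * exp (k * ((b - x) / (b - a))) =
      (b - a) ^ 2 * ((exp (k / 2) - 1) / k ^ 2 - 1 / (2 * k)) := by
  have hd : b - a ≠ 0 := sub_ne_zero.2 hab.symm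
  set c := (a + b) / 2 with hc
  set d := b - a
  have hE : ∀ x, HasDerivAt (fun y => exp (k * ((b - y) / d)))
      (exp (k * ((b - x) / d)) * (-(k / d))) x := fun x =>
    ((((hasDerivAt_id' x).const_sub b).div_const d).const_mul k).exp.congr_deriv (by ring)
  have hF : ∀ x ∈ uIcc c b, HasDerivAt (fun y => -(d / k) * (y - c) * exp (k * ((b - y) / d)) -
      (d / k) ^ 2 * exp (k * ((b - y) / d))) ((x - c) * exp (k * ((b - x) / d))) x := fun x _ => by
    refine (((((hasDerivAt_id' x).sub_const c).const_mul (-(d / k))).mul (hE x)).sub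
      ((hE x).const_mul ((d / k) ^ 2))).congr_deriv ?_
    field_simp
    ring
  rw [integral_eq_sub_of_hasDerivAt hF ((by fun_prop : Continuous _).intervalIntegrable _ _)]
  simp only [sub_self, zero_div, mul_zero, exp_zero]
  have hbc : b - c = d / 2 := by simp only [hc, d]; ring
  rw [hbc, show k * (d / 2 / d) = k / 2 by field_simp]
  field_simp
  ring

theorem exp_sub_one_le_mul_exp_half {k : ℝ} (hk : k ≤ 0) : exp k - 1 ≤ k * exp (k / 2) := by
  have hsinh : exp (k / 2) - exp (-(k / 2)) ≤ k := by
    have := sinh_le_self_iff.2 (by linarith : k / 2 ≤ 0)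
    rw [sinh_eq] at this
    linarith
  have hsq : exp (k / 2) * exp (k / 2) = exp k := by rw [← exp_add]; ring_nf
  have hinv : exp (k / 2) * exp (-(k / 2)) = 1 := by rw [← exp_add]; simp
  nlinarith [exp_pos (k / 2)]

theorem integral_sub_midpoint_mul_exp_le {a b k : ℝ} (hab : a ≠ b) (hk : k < 0) :
    ∫ x in (a + b) / 2..b, (x - (a + b) / 2) * exp (k * ((b - x) / (b - a))) ≤
      (b - a) ^ 2 / 2 * ((-k ^ 2 - 2 * k + 2 * exp k - 2) / k ^ 3) := by
  have hk3 : k ^ 3 < 0 := Odd.pow_neg (by decide) hk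
  have hgap : (-k ^ 2 - 2 * k + 2 * exp k - 2) / (2 * k ^ 3) -
      ((exp (k / 2) - 1) / k ^ 2 - 1 / (2 * k)) = (exp k - 1 - k * exp (k / 2)) / k ^ 3 := by
    field_simp
    ring
  have hgap_nonneg : 0 ≤ (exp k - 1 - k * exp (k / 2)) / k ^ 3 :=
    div_nonneg_of_nonpos (by linarith [exp_sub_one_le_mul_exp_half hk.le]) hk3.le
  rw [integral_sub_midpoint_mul_exp hab hk.ne]
  calc (b - a) ^ 2 * ((exp (k / 2) - 1) / k ^ 2 - 1 / (2 * k))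
      ≤ (b - a) ^ 2 * ((-k ^ 2 - 2 * k + 2 * exp k - 2) / (2 * k ^ 3)) := by gcongr; linarith
    _ = _ := by ring

theorem AlphaMLogConvexOn.nonneg_or_nonpos_of_hasDerivAt {f f' : ℝ → ℝ} {a b α m : ℝ}
    (hf : ∀ x ∈ Ioo a b, HasDerivAt f (f' x) x)
    (hg : AlphaMLogConvexOn α m (b / m) fun x => |f' x|) (hm : m ∈ Ioc 0 1) (ha : 0 ≤ a) :
    (∀ x ∈ Ioo a b, 0 ≤ f' x) ∨ ∀ x ∈ Ioo a b, f' x ≤ 0 := by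
  by_cases hzero : ∃ p ∈ Ioo a b, f' p = 0
  · obtain ⟨p, hp, hp0⟩ := hzero
    have hbm : b ≤ b / m := le_div_self (ha.trans (hp.1.trans hp.2).le) hm.1 hm.2
    refine Or.inl fun x hx => (abs_eq_zero.1 ?_).symm.le
    exact hg.eq_zero_of_eq_zero (fun _ => abs_nonneg _) hm
      ⟨ha.trans hp.1.le, hp.2.le.trans hbm⟩ (by simp [hp0]) ⟨ha.trans_lt hx.1, hx.2⟩
  · push Not at hzero
    rcases hasDerivWithinAt_forall_lt_or_forall_gt_of_forall_ne (convex_Ioo a b)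
      (fun x hx => (hf x hx).hasDerivWithinAt) hzero with hneg | hpos
    · exact Or.inr fun x hx => (hneg x hx).le
    · exact Or.inl fun x hx => (hpos x hx).le

theorem AlphaMLogConvexOn.integral_sub_midpoint_mul_eq_zero {f' : ℝ → ℝ} {a b α m : ℝ}
    (hg : AlphaMLogConvexOn α m (b / m) fun x => |f' x|) (hm : m ∈ Ioc 0 1) (ha : 0 ≤ a)
    (hab : a < b) (hη : |f' a| / |f' (b / m)| ^ m = 0) :
    ∫ x in a..b, (x - (a + b) / 2) * f' x = 0 := by
  have hbm : b ≤ b / m := le_div_self (ha.trans hab.le) hm.1 hm.2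
  obtain ⟨p, hp, hp0⟩ : ∃ p ∈ Icc 0 (b / m), |f' p| = 0 := by
    rcases div_eq_zero_iff.1 hη with h | h
    · exact ⟨a, ⟨ha, hab.le.trans hbm⟩, h⟩
    · exact ⟨b / m, ⟨(ha.trans hab.le).trans hbm, le_rfl⟩,
        (rpow_eq_zero (abs_nonneg _) hm.1.ne').1 h⟩
  have hvanish : ∀ x ∈ Ioo a b, (x - (a + b) / 2) * f' x = 0 := fun x hx => by
    rw [abs_eq_zero.1 (hg.eq_zero_of_eq_zero (fun _ => abs_nonneg _) hm hp hp0
      ⟨ha.trans_lt hx.1, hx.2⟩), mul_zero]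
  simp [integral_congr_Ioo_of_le hab.le hvanish]

theorem AlphaMLogConvexOn.abs_integral_sub_midpoint_mul_deriv_le {f f' : ℝ → ℝ} {a b α m η : ℝ}
    (hf : ∀ x ∈ Icc a b, HasDerivAt f (f' x) x) (hf' : IntervalIntegrable f' volume a b)
    (hg : AlphaMLogConvexOn α m (b / m) fun x => |f' x|) (hα : α ∈ Icc 0 1) (hm : m ∈ Ioc 0 1)
    (ha : 0 ≤ a) (hab : a < b) (hη : η = |f' a| / |f' (b / m)| ^ m) (hη0 : 0 < η) (hη1 : η ≤ 1) :
    |∫ x in a..b, (x - (a + b) / 2) * f' x| ≤ |f' (b / m)| ^ m *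
      ∫ x in (a + b) / 2..b, (x - (a + b) / 2) * exp (α * log η * ((b - x) / (b - a))) := by
  set M := |f' (b / m)| ^ m
  have hk : α * log η ≤ 0 := mul_nonpos_of_nonneg_of_nonpos hα.1 (log_nonpos hη0.le hη1)
  have hmono : MonotoneOn (fun x => M * exp (α * log η * ((b - x) / (b - a)))) (Icc a b) :=
    fun x _ y _ hxy => by
      dsimp only
      gcongr M * exp ?_
      exact mul_le_mul_of_nonpos_left (div_le_div_of_nonneg_right (by linarith) (by linarith)) hk
  calc |∫ x in a..b, (x - (a + b) / 2) * f' x|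
      ≤ ∫ x in (a + b) / 2..b, (x - (a + b) / 2) * (M * exp (α * log η * ((b - x) / (b - a)))) :=
        abs_integral_sub_midpoint_mul_le hab.le hf'
          (hg.nonneg_or_nonpos_of_hasDerivAt (fun x hx => hf x (Ioo_subset_Icc_self hx)) hm ha)
          (fun x hx => hg.le_mul_exp (fun _ => abs_nonneg _) hm hα.2 ha hab hη hη0 hη1
            (Ioo_subset_Icc_self hx))
          hmono
    _ = M * ∫ x in (a + b) / 2..b, (x - (a + b) / 2) * exp (α * log η * ((b - x) / (b - a))) := by
        rw [← intervalIntegral.integral_const_mul]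
        exact integral_congr fun x _ => by ring

theorem stmt1_general
    (I : Set ℝ)
    (hIci : Set.Ici (0:ℝ) ⊆ I)
    (f f' : ℝ → ℝ)
    (hderiv : ∀ x ∈ I, HasDerivAt f (f' x) x)
    (a b : ℝ) (ha : 0 ≤ a) (hab : a < b)
    (hint : IntervalIntegrable f' MeasureTheory.volume a b)
    (α m : ℝ) (hα : α ∈ Set.Ioc (0:ℝ) 1) (hm : m ∈ Set.Ioc (0:ℝ) 1)
    (hconv : ∀ x ∈ Set.Icc (0:ℝ) (b / m), ∀ y ∈ Set.Icc (0:ℝ) (b / m), ∀ t ∈ Set.Icc (0:ℝ) 1,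
      |f' (t * x + m * (1 - t) * y)| ≤ |f' (x)| ^ (t ^ α) * |f' (y)| ^ (m * (1 - t ^ α)))
    (η : ℝ) (hη : η = |f' a| / |f' (b / m)| ^ m) :
    (η = 1 → |(f a + f b) / 2 - (1 / (b - a)) * ∫ x in a..b, f x| ≤ (b - a) / 3 * |f' (b / m)| ^ m) ∧
    (η < 1 → |(f a + f b) / 2 - (1 / (b - a)) * ∫ x in a..b, f x| ≤ (b - a) / 2 * |f' (b / m)| ^ m *
      ((-(α ^ 2 * Real.log η ^ 2) - 2 * α * Real.log η + 2 * η ^ α - 2) /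
        (α ^ 3 * Real.log η ^ 3))) := by
  have hg : AlphaMLogConvexOn α m (b / m) fun x => |f' x| := hconv
  have hf : ∀ x ∈ Icc a b, HasDerivAt f (f' x) x := fun x hx => hderiv x (hIci (ha.trans hx.1))
  have hba : 0 < b - a := sub_pos.2 hab
  have hM : 0 ≤ |f' (b / m)| ^ m := rpow_nonneg (abs_nonneg _) m
  have hJ := hg.abs_integral_sub_midpoint_mul_deriv_le hf hint (Ioc_subset_Icc_self hα) hm ha hab hη
  rw [trapezoid_sub_average_eq hab.ne (by rwa [uIcc_of_le hab.le]) hint, abs_div, abs_of_pos hba,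
    div_le_iff₀ hba, div_le_iff₀ hba]
  refine ⟨fun h1 => ?_, fun h1 => ?_⟩
  · have h := hJ (by rw [h1]; norm_num) h1.le
    simp only [h1, log_one, mul_zero, zero_mul, exp_zero, mul_one, integral_sub_midpoint] at h
    nlinarith
  · rcases (hη ▸ div_nonneg (abs_nonneg _) hM : 0 ≤ η).eq_or_lt with h0 | h0
    · rw [hg.integral_sub_midpoint_mul_eq_zero hm ha hab (hη ▸ h0.symm), ← h0]
      simp
    · have hk : α * log η < 0 := mul_neg_of_pos_of_neg hα.1 (log_neg h0 h1)
      refine ((hJ h0 h1.le).trans (mul_le_mul_of_nonneg_left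
        (integral_sub_midpoint_mul_exp_le hab.ne hk) hM)).trans (le_of_eq ?_)
      rw [rpow_def_of_pos h0, mul_comm (log η) α]
      ring

theorem stmt1
    (I : Set ℝ) (hIopen : IsOpen I) (hIconn : Set.OrdConnected I)
    (hIci : Set.Ici (0:ℝ) ⊆ I)
    (f f' : ℝ → ℝ)
    (hfpos : ∀ x ∈ I, 0 < f x)
    (hderiv : ∀ x ∈ I, HasDerivAt f (f' x) x)
    (a b : ℝ) (ha : 0 ≤ a) (hab : a < b)
    (hint : IntervalIntegrable f' MeasureTheory.volume a b)
    (α m : ℝ) (hα : α ∈ Set.Ioc (0:ℝ) 1) (hm : m ∈ Set.Ioc (0:ℝ) 1)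
    (hconv : ∀ x ∈ Set.Icc (0:ℝ) (b / m), ∀ y ∈ Set.Icc (0:ℝ) (b / m), ∀ t ∈ Set.Icc (0:ℝ) 1,
      |f' (t * x + m * (1 - t) * y)| ≤ |f' (x)| ^ (t ^ α) * |f' (y)| ^ (m * (1 - t ^ α)))
    (η : ℝ) (hη : η = |f' a| / |f' (b / m)| ^ m) :
    (η = 1 → |(f a + f b) / 2 - (1 / (b - a)) * ∫ x in a..b, f x| ≤ (b - a) / 3 * |f' (b / m)| ^ m) ∧
    (η < 1 → |(f a + f b) / 2 - (1 / (b - a)) * ∫ x in a..b, f x| ≤ (b - a) / 2 * |f' (b / m)| ^ m *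
      ((-(α ^ 2 * Real.log η ^ 2) - 2 * α * Real.log η + 2 * η ^ α - 2) /
        (α ^ 3 * Real.log η ^ 3))) :=
  stmt1_general I hIci f f' hderiv a b ha hab hint α m hα hm hconv η hη
end

section
/- Let I ⊃ [0,∞) be an open interval and let f : I → (0,∞) be differentiable on I with f' integrable on (a,b), where 0 ≤ a < b < ∞. Suppose |f'|² is m-logarithmically convex on [0, b/m] for some m ∈ (0,1], and set η = |f'(a)| / |f'(b/m)|^m. Then: if η = 1, |(f(a)+f(b))/2 − (1/(b−a))·∫_a^b f(x) dx| ≤ (b−a)·|f'(b/m)|^m·√(1/6); and if η < 1, |(f(a)+f(b))/2 − (1/(b−a))·∫_a^b f(x) dx| ≤ (b−a)·|f'(b/m)|^m·√(1/6)·((η² − 1)/(2·ln η))^{1/2}. -/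
/-! Integration by parts writes the trapezoid error as
`(b - a)⁻¹ ∫ (x - (a + b) / 2) f' x`, and Cauchy–Schwarz bounds it by `√((b - a) ∫ f' ^ 2 / 12)`.
Since `x = t a + m (1 - t) (b / m)` for `t = (b - x) / (b - a)`, m-logarithmic convexity of
`|f'|²` gives `f' x ^ 2 ≤ |f' (b / m)| ^ (2 * m) * η ^ (2 * t)`, whose integral over `[a, b]` is
`(b - a) |f' (b / m)| ^ (2 * m) (η ^ 2 - 1) / (2 log η)`. If `η = 0` the same bound forces
`f' = 0` on `(a, b)`, so the error vanishes, as does the right-hand side through `log 0 = 0`. -/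

open MeasureTheory Real Set intervalIntegral

def MLogConvexOn (m : ℝ) (s : Set ℝ) (g : ℝ → ℝ) : Prop :=
  ∀ x ∈ s, ∀ y ∈ s, ∀ t ∈ Icc (0 : ℝ) 1,
    g (t * x + m * (1 - t) * y) ≤ g x ^ t * g y ^ (m * (1 - t))

theorem MLogConvexOn.le_rpow_mul_rpow {g : ℝ → ℝ} {m a b x : ℝ}
    (hg : MLogConvexOn m (Icc 0 (b / m)) g) (hm : m ∈ Ioc 0 1) (ha : 0 ≤ a) (hab : a < b)
    (hx : x ∈ Icc a b) :
    g x ≤ g a ^ ((b - x) / (b - a)) * g (b / m) ^ (m * (1 - (b - x) / (b - a))) := by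
  obtain ⟨hm0, hm1⟩ := hm
  have hba : 0 < b - a := sub_pos.mpr hab
  have hbm : b ≤ b / m := le_div_self (ha.trans hab.le) hm0 hm1
  have ht : (b - x) / (b - a) ∈ Icc (0 : ℝ) 1 :=
    ⟨div_nonneg (by linarith [hx.2]) hba.le, (div_le_one hba).mpr (by linarith [hx.1])⟩
  have hpoint : (b - x) / (b - a) * a + m * (1 - (b - x) / (b - a)) * (b / m) = x := by
    field_simp
    ring
  simpa only [hpoint] using
    hg a ⟨ha, hab.le.trans hbm⟩ (b / m) ⟨(ha.trans hab.le).trans hbm, le_rfl⟩ _ ht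

theorem sq_rpow_mul_sq_rpow_eq_zero {A C m t : ℝ} (hC : 0 ≤ C) (hm : 0 < m)
    (ht : t ∈ Ioo (0 : ℝ) 1) (h : A / C ^ m = 0) :
    (A ^ 2) ^ t * (C ^ 2) ^ (m * (1 - t)) = 0 := by
  rcases div_eq_zero_iff.mp h with rfl | hCm
  · simp [zero_rpow ht.1.ne']
  · obtain ⟨rfl, -⟩ := (rpow_eq_zero_iff_of_nonneg hC).mp hCm
    simp [zero_rpow (mul_pos hm (sub_pos.mpr ht.2)).ne']

theorem sq_rpow_mul_sq_rpow_eq_mul_exp {A C m : ℝ} (t : ℝ) (hC : 0 ≤ C) (hm : 0 < m)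
    (h : 0 < A / C ^ m) :
    (A ^ 2) ^ t * (C ^ 2) ^ (m * (1 - t)) = (C ^ m) ^ 2 * exp (2 * log (A / C ^ m) * t) := by
  have hC : 0 < C := hC.lt_of_ne' fun h0 => by simp [h0, zero_rpow hm.ne'] at h
  have hCm : 0 < C ^ m := rpow_pos_of_pos hC m
  have hA : 0 < A := (div_pos_iff_of_pos_right hCm).mp h
  rw [rpow_def_of_pos (pow_pos hA 2), rpow_def_of_pos (pow_pos hC 2), ← exp_log (pow_pos hCm 2),
    ← exp_add, ← exp_add, log_pow, log_pow, log_pow, log_div hA.ne' hCm.ne', log_rpow hC]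
  congr 1
  push_cast
  ring

theorem intervalIntegral.abs_integral_mul_le_sqrt_mul_sqrt {g h : ℝ → ℝ} {a b : ℝ}
    (hab : a ≤ b)
    (hg : IntervalIntegrable (fun x => g x ^ 2) volume a b)
    (hh : IntervalIntegrable (fun x => h x ^ 2) volume a b)
    (hgh : IntervalIntegrable (fun x => g x * h x) volume a b) :
    |∫ x in a..b, g x * h x| ≤ √(∫ x in a..b, g x ^ 2) * √(∫ x in a..b, h x ^ 2) := by
  have hquad : ∀ s : ℝ, 0 ≤ (∫ x in a..b, h x ^ 2) * (s * s)
      + (-2 * ∫ x in a..b, g x * h x) * s + ∫ x in a..b, g x ^ 2 := by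
    intro s
    have hnonneg : 0 ≤ ∫ x in a..b, (s * h x - g x) ^ 2 :=
      integral_nonneg hab fun x _ => sq_nonneg _
    have hexpand : (fun x => (s * h x - g x) ^ 2)
        = fun x => (s ^ 2 * h x ^ 2 - 2 * s * (g x * h x)) + g x ^ 2 := by
      funext x; ring
    rw [hexpand, integral_add ((hh.const_mul _).sub (hgh.const_mul _)) hg,
      integral_sub (hh.const_mul _) (hgh.const_mul _), integral_const_mul,
      integral_const_mul] at hnonneg
    linarith
  have hdisc := discrim_le_zero hquad
  rw [discrim] at hdisc
  rw [← sqrt_mul (integral_nonneg hab fun x _ => sq_nonneg _), ← sqrt_sq_eq_abs]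
  exact sqrt_le_sqrt (by linarith)

theorem integral_sub_midpoint_sq (a b : ℝ) :
    ∫ x in a..b, (x - (a + b) / 2) ^ 2 = (b - a) ^ 3 / 12 := by
  simp only [integral_comp_sub_right (fun x => x ^ 2), integral_pow]
  ring

theorem integral_exp_mul_sub_div {a b L : ℝ} (hab : a ≠ b) (hL : L ≠ 0) :
    ∫ x in a..b, exp (L * ((b - x) / (b - a))) = (b - a) * ((exp L - 1) / L) := by
  have hderiv : ∀ x, HasDerivAt (fun y => -((b - a) / L) * exp (L * ((b - y) / (b - a))))
      (exp (L * ((b - x) / (b - a)))) x := by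
    intro x
    refine (((((hasDerivAt_id' x).const_sub b).div_const (b - a)).const_mul L).exp.const_mul
      (-((b - a) / L))).congr_deriv ?_
    field_simp
  rw [integral_eq_sub_of_hasDerivAt (fun x _ => hderiv x)
    (Continuous.intervalIntegrable (by fun_prop) _ _)]
  simp only [sub_self, zero_div, mul_zero, exp_zero]
  field_simp
  ring

theorem trapezoid_error_eq {f f' : ℝ → ℝ} {a b : ℝ} (hab : a ≠ b)
    (hf : ∀ x ∈ uIcc a b, HasDerivAt f (f' x) x) (hf' : IntervalIntegrable f' volume a b) :
    (f a + f b) / 2 - 1 / (b - a) * ∫ x in a..b, f x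
      = 1 / (b - a) * ∫ x in a..b, (x - (a + b) / 2) * f' x := by
  rw [integral_mul_deriv_eq_deriv_mul (u := fun x => x - (a + b) / 2)
    (fun x _ => (hasDerivAt_id x).sub_const _) hf intervalIntegrable_const hf']
  simp only [one_mul]
  field_simp
  ring

theorem abs_trapezoid_error_le {f f' D : ℝ → ℝ} {a b : ℝ} (hab : a < b)
    (hf : ∀ x ∈ Icc a b, HasDerivAt f (f' x) x) (hf' : IntervalIntegrable f' volume a b)
    (hD : IntervalIntegrable D volume a b) (hf'D : ∀ x ∈ Ioo a b, f' x ^ 2 ≤ D x) :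
    |(f a + f b) / 2 - 1 / (b - a) * ∫ x in a..b, f x|
      ≤ √((b - a) * (∫ x in a..b, D x) / 12) := by
  have hba : 0 < b - a := sub_pos.mpr hab
  have hf'2 : IntervalIntegrable (fun x => f' x ^ 2) volume a b := by
    refine hD.mono_fun' (hf'.def'.aestronglyMeasurable.pow 2) ?_
    rw [uIoc_of_le hab.le, ← Measure.restrict_congr_set Ioo_ae_eq_Ioc]
    exact ae_restrict_of_forall_mem measurableSet_Ioo fun x hx => by
      simpa only [norm_pow, norm_eq_abs, sq_abs] using hf'D x hx
  have hCS := abs_integral_mul_le_sqrt_mul_sqrt hab.le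
    (Continuous.intervalIntegrable (by fun_prop) _ _) hf'2
    (hf'.continuousOn_mul (by fun_prop : Continuous fun x : ℝ => x - (a + b) / 2).continuousOn)
  rw [integral_sub_midpoint_sq] at hCS
  have hf'D_int : ∫ x in a..b, f' x ^ 2 ≤ ∫ x in a..b, D x :=
    integral_mono_on_of_le_Ioo hab.le hf'2 hD hf'D
  calc |(f a + f b) / 2 - 1 / (b - a) * ∫ x in a..b, f x|
      = 1 / (b - a) * |∫ x in a..b, (x - (a + b) / 2) * f' x| := by
        rw [trapezoid_error_eq hab.ne (fun x hx => hf x (uIcc_of_le hab.le ▸ hx)) hf',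
          abs_mul, abs_of_pos (one_div_pos.mpr hba)]
    _ ≤ 1 / (b - a) * (√((b - a) ^ 3 / 12) * √(∫ x in a..b, D x)) := by
        gcongr
        exact hCS.trans (by gcongr)
    _ = √((b - a) * (∫ x in a..b, D x) / 12) := by
        rw [← sqrt_mul (by positivity), show (b - a) ^ 3 / 12 * ∫ x in a..b, D x
          = (b - a) ^ 2 * ((b - a) * (∫ x in a..b, D x) / 12) by ring,
          sqrt_mul (by positivity), sqrt_sq hba.le]
        field_simp

theorem sqrt_sq_mul_div_twelve_le {u K : ℝ} (hu : 0 ≤ u) (hK : 0 ≤ K) :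
    √(u ^ 2 * K / 12) ≤ u * √(1 / 6) * √K := by
  rw [mul_assoc, ← sqrt_mul (by norm_num), ← sqrt_sq hu, ← sqrt_mul (sq_nonneg u), sqrt_sq hu]
  exact sqrt_le_sqrt (by nlinarith [sq_nonneg u])

theorem abs_trapezoid_error_le_of_sq_le_mul_exp {f f' : ℝ → ℝ} {a b B L K : ℝ} (hab : a < b)
    (hf : ∀ x ∈ Icc a b, HasDerivAt f (f' x) x) (hf' : IntervalIntegrable f' volume a b)
    (hB : 0 ≤ B) (hK : 0 ≤ K)
    (hf'B : ∀ x ∈ Ioo a b, f' x ^ 2 ≤ B ^ 2 * exp (L * ((b - x) / (b - a))))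
    (hexpK : ∫ x in a..b, exp (L * ((b - x) / (b - a))) = (b - a) * K) :
    |(f a + f b) / 2 - 1 / (b - a) * ∫ x in a..b, f x| ≤ (b - a) * B * √(1 / 6) * √K := by
  have hE := abs_trapezoid_error_le hab hf hf'
    (Continuous.intervalIntegrable (by fun_prop) _ _) hf'B
  rw [intervalIntegral.integral_const_mul, hexpK] at hE
  exact hE.trans_eq (by ring_nf) |>.trans (sqrt_sq_mul_div_twelve_le (by positivity) hK)

theorem stmt5_general
    (I : Set ℝ)
    (hIci : Set.Ici (0:ℝ) ⊆ I)
    (f f' : ℝ → ℝ)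
    (hderiv : ∀ x ∈ I, HasDerivAt f (f' x) x)
    (a b : ℝ) (ha : 0 ≤ a) (hab : a < b)
    (hint : IntervalIntegrable f' MeasureTheory.volume a b)
    (m : ℝ) (hm : m ∈ Set.Ioc (0:ℝ) 1)
    (hconv : ∀ x ∈ Set.Icc (0:ℝ) (b / m), ∀ y ∈ Set.Icc (0:ℝ) (b / m), ∀ t ∈ Set.Icc (0:ℝ) 1,
      |f' (t * x + m * (1 - t) * y)| ^ 2 ≤ (|f' (x)| ^ 2) ^ t * (|f' (y)| ^ 2) ^ (m * (1 - t)))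
    (η : ℝ) (hη : η = |f' a| / |f' (b / m)| ^ m) :
    (η = 1 → |(f a + f b) / 2 - (1 / (b - a)) * ∫ x in a..b, f x| ≤ (b - a) * |f' (b / m)| ^ m * Real.sqrt (1 / 6)) ∧
    (η < 1 → |(f a + f b) / 2 - (1 / (b - a)) * ∫ x in a..b, f x| ≤ (b - a) * |f' (b / m)| ^ m * Real.sqrt (1 / 6) *
      ((η ^ 2 - 1) / (2 * Real.log η)) ^ ((1:ℝ) / 2)) := by
  have hf : ∀ x ∈ Icc a b, HasDerivAt f (f' x) x := fun x hx => hderiv x (hIci (ha.trans hx.1))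
  have hbound : ∀ x ∈ Ioo a b, f' x ^ 2 ≤
      (|f' a| ^ 2) ^ ((b - x) / (b - a)) * (|f' (b / m)| ^ 2) ^ (m * (1 - (b - x) / (b - a))) :=
    fun x hx => sq_abs (f' x) ▸
      MLogConvexOn.le_rpow_mul_rpow (g := fun x => |f' x| ^ 2) hconv hm ha hab
        (Ioo_subset_Icc_self hx)
  have hba : 0 < b - a := sub_pos.mpr hab
  rcases (show 0 ≤ η by rw [hη]; positivity).eq_or_lt with hη0 | hηpos
  · refine ⟨fun h => by linarith, fun _ => ?_⟩
    have hE := abs_trapezoid_error_le (D := 0) hab hf hint intervalIntegrable_const fun x hx =>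
      (hbound x hx).trans_eq <| sq_rpow_mul_sq_rpow_eq_zero (abs_nonneg _) hm.1
        ⟨div_pos (by linarith [hx.2]) hba, (div_lt_one hba).mpr (by linarith [hx.1])⟩
        (hη ▸ hη0.symm)
    simpa [← hη0] using hE
  · have hf'B : ∀ x ∈ Ioo a b, f' x ^ 2 ≤
        (|f' (b / m)| ^ m) ^ 2 * exp (2 * log η * ((b - x) / (b - a))) := fun x hx =>
      (hbound x hx).trans_eq <|
        hη ▸ sq_rpow_mul_sq_rpow_eq_mul_exp _ (abs_nonneg _) hm.1 (hη ▸ hηpos)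
    have hB : 0 ≤ |f' (b / m)| ^ m := by positivity
    refine ⟨fun h1 => ?_, fun hlt => ?_⟩
    · simpa using abs_trapezoid_error_le_of_sq_le_mul_exp hab hf hint hB zero_le_one hf'B
        (by simp [h1])
    have hlog : log η < 0 := log_neg hηpos hlt
    have hexp : exp (2 * log η) = η ^ 2 := by
      rw [← exp_log (pow_pos hηpos 2), log_pow, Nat.cast_ofNat]
    rw [← sqrt_eq_rpow]
    refine abs_trapezoid_error_le_of_sq_le_mul_exp hab hf hint hB
      (div_nonneg_of_nonpos (by nlinarith) (by linarith)) hf'B ?_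
    rw [integral_exp_mul_sub_div hab.ne (mul_ne_zero two_ne_zero hlog.ne), hexp]

theorem stmt5
    (I : Set ℝ) (hIopen : IsOpen I) (hIconn : Set.OrdConnected I)
    (hIci : Set.Ici (0:ℝ) ⊆ I)
    (f f' : ℝ → ℝ)
    (hfpos : ∀ x ∈ I, 0 < f x)
    (hderiv : ∀ x ∈ I, HasDerivAt f (f' x) x)
    (a b : ℝ) (ha : 0 ≤ a) (hab : a < b)
    (hint : IntervalIntegrable f' MeasureTheory.volume a b)
    (m : ℝ) (hm : m ∈ Set.Ioc (0:ℝ) 1)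
    (hconv : ∀ x ∈ Set.Icc (0:ℝ) (b / m), ∀ y ∈ Set.Icc (0:ℝ) (b / m), ∀ t ∈ Set.Icc (0:ℝ) 1,
      |f' (t * x + m * (1 - t) * y)| ^ 2 ≤ (|f' (x)| ^ 2) ^ t * (|f' (y)| ^ 2) ^ (m * (1 - t)))
    (η : ℝ) (hη : η = |f' a| / |f' (b / m)| ^ m) :
    (η = 1 → |(f a + f b) / 2 - (1 / (b - a)) * ∫ x in a..b, f x| ≤ (b - a) * |f' (b / m)| ^ m * Real.sqrt (1 / 6)) ∧
    (η < 1 → |(f a + f b) / 2 - (1 / (b - a)) * ∫ x in a..b, f x| ≤ (b - a) * |f' (b / m)| ^ m * Real.sqrt (1 / 6) *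
      ((η ^ 2 - 1) / (2 * Real.log η)) ^ ((1:ℝ) / 2)) :=
  stmt5_general I hIci f f' hderiv a b ha hab hint m hm hconv η hη
end

section
/- Let I ⊃ [0,∞) be an open interval and let f : I → (0,∞) be differentiable on I with f' integrable on (a,b), where 0 ≤ a < b < ∞. Suppose |f'|^q is α-logarithmically convex on [0, b] for some α ∈ (0,1] and p, q > 1 with 1/p + 1/q = 1, and set η = |f'(a)| / |f'(b)|. Then: if η = 1, |(f(a)+f(b))/2 − (1/(b−a))·∫_a^b f(x) dx| ≤ (b−a)·|f'(b)|·(2/((p+1)(p+2)))^{1/p}; and if η < 1, |(f(a)+f(b))/2 − (1/(b−a))·∫_a^b f(x) dx| ≤ (b−a)·|f'(b)|·(2/((p+1)(p+2)))^{1/p}·((η^{αq} − 1)/(αq·ln η))^{1/q}. -/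
/-!
Integrating by parts, `(f a + f b) / 2 - ⨍ f = (b - a)⁻¹ ∫ (x - m) f' x` with `m` the
midpoint, and Hölder's inequality splits the right-hand side into `∫ |x - m| ^ p`, which equals
`(b - a) ^ (p + 1) / (2 ^ p (p + 1)) ≤ (b - a) ^ (p + 1) · 2 / ((p + 1) (p + 2))` by Bernoulli,
and `∫ |f'| ^ q`. Writing `x = t a + (1 - t) b`, α-logarithmic convexity together with
`α t ≤ t ^ α` gives `|f' x| ^ q ≤ |f' b| ^ q η ^ (α q t)`, whose integral over `t ∈ [0, 1]`
is `(η ^ (α q) - 1) / (α q log η)` (or `1` when `η = 1`).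
-/

open MeasureTheory Real Set intervalIntegral

section

variable {f f' : ℝ → ℝ} {a b p q : ℝ}

theorem integral_comp_sub_div_sub (g : ℝ → ℝ) (hab : a ≠ b) :
    ∫ x in a..b, g ((b - x) / (b - a)) = (b - a) * ∫ t in (0 : ℝ)..1, g t := by
  have hba : b - a ≠ 0 := sub_ne_zero.mpr hab.symm
  simp_rw [sub_div]
  rw [integral_comp_sub_div g hba, sub_self, ← sub_div, div_self hba, smul_eq_mul]

theorem integral_exp_mul_zero_one {c : ℝ} (hc : c ≠ 0) :
    ∫ t in (0 : ℝ)..1, exp (c * t) = (exp c - 1) / c := by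
  rw [integral_comp_mul_left exp hc, mul_zero, mul_one, integral_exp, exp_zero, smul_eq_mul,
    inv_mul_eq_div]

theorem integral_abs_sub_midpoint_rpow (hab : a ≤ b) (hp : 0 ≤ p) :
    ∫ x in a..b, |x - (a + b) / 2| ^ p = (b - a) ^ (p + 1) / (2 ^ p * (p + 1)) := by
  set m := (a + b) / 2 with hm
  have ham : a ≤ m := by linarith
  have hmb : m ≤ b := by linarith
  have hcont : Continuous fun x : ℝ => |x - m| ^ p :=
    (continuous_id.sub continuous_const).abs.rpow_const fun _ => Or.inr hp
  have hhalf : ∫ u in (0 : ℝ)..(b - a) / 2, u ^ p = ((b - a) / 2) ^ (p + 1) / (p + 1) := by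
    rw [integral_rpow (Or.inl (by linarith)), zero_rpow (by linarith), sub_zero]
  have hleft : ∫ x in a..m, |x - m| ^ p = ((b - a) / 2) ^ (p + 1) / (p + 1) := by
    rw [integral_congr (g := fun x => (m - x) ^ p) fun x hx => by
      rw [uIcc_of_le ham] at hx
      simp only [abs_of_nonpos (sub_nonpos.mpr hx.2), neg_sub]]
    rw [integral_comp_sub_left (fun u => u ^ p), sub_self, show m - a = (b - a) / 2 by ring,
      hhalf]
  have hright : ∫ x in m..b, |x - m| ^ p = ((b - a) / 2) ^ (p + 1) / (p + 1) := by
    rw [integral_congr (g := fun x => (x - m) ^ p) fun x hx => by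
      rw [uIcc_of_le hmb] at hx
      simp only [abs_of_nonneg (sub_nonneg.mpr hx.1)]]
    rw [integral_comp_sub_right (fun u => u ^ p), sub_self, show b - m = (b - a) / 2 by ring,
      hhalf]
  rw [← integral_add_adjacent_intervals (hcont.intervalIntegrable a m)
    (hcont.intervalIntegrable m b), hleft, hright, div_rpow (by linarith) zero_le_two,
    rpow_add_one two_ne_zero]
  field_simp
  ring

theorem one_div_two_rpow_mul_le (hp : 0 ≤ p) :
    1 / (2 ^ p * (p + 1)) ≤ 2 / ((p + 1) * (p + 2)) := by
  have hbernoulli := one_add_mul_self_le_rpow_one_add (by norm_num : (-1 : ℝ) ≤ 1)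
    (by linarith : 1 ≤ p + 1)
  rw [one_add_one_eq_two, rpow_add_one two_ne_zero] at hbernoulli
  rw [div_le_div_iff₀ (by positivity) (by positivity)]
  nlinarith

theorem abs_intervalIntegral_mul_le_Lp_mul_Lq {g h : ℝ → ℝ} (hab : a ≤ b)
    (hpq : p.HolderConjugate q) (hg : AEStronglyMeasurable g (volume.restrict (Ioc a b)))
    (hh : AEStronglyMeasurable h (volume.restrict (Ioc a b)))
    (hgp : IntervalIntegrable (fun x => |g x| ^ p) volume a b)
    (hhq : IntervalIntegrable (fun x => |h x| ^ q) volume a b) :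
    |∫ x in a..b, g x * h x| ≤
      (∫ x in a..b, |g x| ^ p) ^ (1 / p) * (∫ x in a..b, |h x| ^ q) ^ (1 / q) := by
  have memLp {r : ℝ} {u : ℝ → ℝ} (hr : 0 < r)
      (hu : AEStronglyMeasurable u (volume.restrict (Ioc a b)))
      (hur : IntervalIntegrable (fun x => |u x| ^ r) volume a b) :
      MemLp u (ENNReal.ofReal r) (volume.restrict (Ioc a b)) := by
    refine (integrable_norm_rpow_iff hu (by simpa using hr) ENNReal.ofReal_ne_top).1 ?_
    simp only [ENNReal.toReal_ofReal hr.le, Real.norm_eq_abs]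
    exact (intervalIntegrable_iff_integrableOn_Ioc_of_le hab).1 hur
  simp only [integral_of_le hab]
  calc |∫ x in Ioc a b, g x * h x| ≤ ∫ x in Ioc a b, |g x * h x| :=
        MeasureTheory.abs_integral_le_integral_abs
    _ ≤ _ := by
        simpa only [abs_mul, Real.norm_eq_abs] using
          integral_mul_norm_le_Lp_mul_Lq hpq (memLp hpq.pos hg hgp) (memLp hpq.symm.pos hh hhq)

theorem trapezoid_sub_average_eq_integral_mul_deriv (hab : a ≠ b)
    (hderiv : ∀ x ∈ uIcc a b, HasDerivAt f (f' x) x) (hint : IntervalIntegrable f' volume a b) :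
    (f a + f b) / 2 - (1 / (b - a)) * ∫ x in a..b, f x
      = (1 / (b - a)) * ∫ x in a..b, (x - (a + b) / 2) * f' x := by
  rw [integral_mul_deriv_eq_deriv_mul (fun x _ => (hasDerivAt_id' x).sub_const ((a + b) / 2))
    hderiv intervalIntegrable_const hint]
  have hba : b - a ≠ 0 := sub_ne_zero.mpr hab.symm
  field_simp
  ring

theorem abs_trapezoid_sub_average_le {w : ℝ → ℝ} (hab : a < b) (hpq : p.HolderConjugate q)
    (hderiv : ∀ x ∈ Icc a b, HasDerivAt f (f' x) x) (hint : IntervalIntegrable f' volume a b)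
    (hw : IntervalIntegrable w volume a b) (hbound : ∀ x ∈ Ioo a b, |f' x| ^ q ≤ w x) :
    |(f a + f b) / 2 - (1 / (b - a)) * ∫ x in a..b, f x| ≤
      ((b - a) / (2 ^ p * (p + 1))) ^ (1 / p) * (∫ x in a..b, w x) ^ (1 / q) := by
  have hd : 0 < b - a := sub_pos.mpr hab
  have hf'm : AEStronglyMeasurable f' (volume.restrict (Ioc a b)) := hint.1.aestronglyMeasurable
  have hf'q : IntervalIntegrable (fun x => |f' x| ^ q) volume a b := by
    rw [intervalIntegrable_iff_integrableOn_Ioo_of_le hab.le]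
    refine (hw.1.mono_set Ioo_subset_Ioc_self).mono'
      ((hf'm.norm.aemeasurable.pow_const q).aestronglyMeasurable.mono_measure
        (Measure.restrict_mono Ioo_subset_Ioc_self le_rfl))
      ((ae_restrict_iff' measurableSet_Ioo).2 (Filter.Eventually.of_forall fun x hx => ?_))
    rw [Real.norm_of_nonneg (by positivity)]
    exact hbound x hx
  have hcont : Continuous fun x : ℝ => x - (a + b) / 2 := continuous_id.sub continuous_const
  have hholder := abs_intervalIntegral_mul_le_Lp_mul_Lq hab.le hpq hcont.aestronglyMeasurable
    hf'm ((hcont.abs.rpow_const fun _ => Or.inr hpq.nonneg).intervalIntegrable a b) hf'q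
  have hmono : ∫ x in a..b, |f' x| ^ q ≤ ∫ x in a..b, w x :=
    integral_mono_on_of_le_Ioo hab.le hf'q hw hbound
  have hscale : 1 / (b - a) * ((b - a) ^ (p + 1) / (2 ^ p * (p + 1))) ^ (1 / p)
      = ((b - a) / (2 ^ p * (p + 1))) ^ (1 / p) := by
    have hc : 0 < 2 ^ p * (p + 1) := by have := hpq.pos; positivity
    rw [rpow_add_one hd.ne', mul_div_assoc,
      mul_rpow (rpow_nonneg hd.le p) (div_nonneg hd.le hc.le), one_div p,
      rpow_rpow_inv hd.le hpq.ne_zero, ← mul_assoc, one_div_mul_cancel hd.ne', one_mul]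
  calc |(f a + f b) / 2 - (1 / (b - a)) * ∫ x in a..b, f x|
      = 1 / (b - a) * |∫ x in a..b, (x - (a + b) / 2) * f' x| := by
        rw [trapezoid_sub_average_eq_integral_mul_deriv hab.ne (by rwa [uIcc_of_le hab.le]) hint,
          abs_mul, abs_of_pos (by positivity)]
    _ ≤ 1 / (b - a) * ((∫ x in a..b, |x - (a + b) / 2| ^ p) ^ (1 / p)
          * (∫ x in a..b, w x) ^ (1 / q)) := by
        gcongr
        refine hholder.trans (mul_le_mul_of_nonneg_left ?_ (rpow_nonneg ?_ _))
        · exact rpow_le_rpow (integral_nonneg hab.le fun x _ => by positivity) hmono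
            hpq.symm.one_div_nonneg
        · exact integral_nonneg hab.le fun x _ => by positivity
    _ = ((b - a) / (2 ^ p * (p + 1))) ^ (1 / p) * (∫ x in a..b, w x) ^ (1 / q) := by
        rw [integral_abs_sub_midpoint_rpow hab.le hpq.nonneg, ← mul_assoc, hscale]

end

def IsAlphaLogConvexOn (α : ℝ) (s : Set ℝ) (g : ℝ → ℝ) : Prop :=
  ∀ x ∈ s, ∀ y ∈ s, ∀ t ∈ Icc (0 : ℝ) 1,
    g (t * x + (1 - t) * y) ≤ (g x) ^ (t ^ α) * (g y) ^ (1 - t ^ α)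

namespace IsAlphaLogConvexOn

variable {α : ℝ} {s : Set ℝ} {g : ℝ → ℝ} {x y t : ℝ}

theorem le_mul_exp (hg : IsAlphaLogConvexOn α s g) (hα : α ≤ 1) (hx : x ∈ s) (hy : y ∈ s)
    (hgx : 0 < g x) (hxy : g x ≤ g y) (ht : t ∈ Icc (0 : ℝ) 1) :
    g (t * x + (1 - t) * y) ≤ g y * exp (α * log (g x / g y) * t) := by
  have hgy : 0 < g y := hgx.trans_le hxy
  have hlog : log (g x / g y) ≤ 0 := log_nonpos (by positivity) ((div_le_one hgy).2 hxy)
  have hαt : α * t ≤ t ^ α :=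
    (mul_le_of_le_one_left ht.1 hα).trans (self_le_rpow_of_le_one ht.1 ht.2 hα)
  calc g (t * x + (1 - t) * y) ≤ (g x) ^ (t ^ α) * (g y) ^ (1 - t ^ α) := hg x hx y hy t ht
    _ = exp (log (g y) + log (g x / g y) * t ^ α) := by
        rw [rpow_def_of_pos hgx, rpow_def_of_pos hgy, ← exp_add, log_div hgx.ne' hgy.ne']
        ring_nf
    _ ≤ exp (log (g y) + α * log (g x / g y) * t) := by
        have := mul_le_mul_of_nonpos_left hαt hlog
        exact exp_le_exp.2 (by linarith)
    _ = g y * exp (α * log (g x / g y) * t) := by rw [exp_add, exp_log hgy]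

theorem le_zero_of_eq_zero (hg : IsAlphaLogConvexOn α s g) (hx : x ∈ s) (hy : y ∈ s)
    (hgx : g x = 0) (ht : t ∈ Ioc (0 : ℝ) 1) : g (t * x + (1 - t) * y) ≤ 0 := by
  have := hg x hx y hy t ⟨ht.1.le, ht.2⟩
  rwa [hgx, zero_rpow (rpow_pos_of_pos ht.1 α).ne', zero_mul] at this

theorem le_zero_on_Ioo {a b : ℝ} (hg : IsAlphaLogConvexOn α (Icc 0 b) g) (ha : 0 ≤ a)
    (hab : a < b) (h0 : g a = 0 ∨ g b = 0) : ∀ z ∈ Ioo a b, g z ≤ 0 := by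
  intro z hz
  have hd : 0 < b - a := sub_pos.mpr hab
  have hb : 0 < b := ha.trans_lt hab
  have has : a ∈ Icc 0 b := ⟨ha, hab.le⟩
  have hbs : b ∈ Icc 0 b := ⟨hb.le, le_rfl⟩
  rcases h0 with h0 | h0
  · have := hg.le_zero_of_eq_zero has hbs h0 (t := (b - z) / (b - a))
      ⟨div_pos (by linarith [hz.2]) hd, (div_le_one hd).2 (by linarith [hz.1])⟩
    rwa [show (b - z) / (b - a) * a + (1 - (b - z) / (b - a)) * b = z by field_simp; ring]
      at this
  · have := hg.le_zero_of_eq_zero hbs ⟨le_rfl, hb.le⟩ h0 (t := z / b)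
      ⟨div_pos (ha.trans_lt hz.1) hb, (div_le_one hb).2 hz.2.le⟩
    rwa [mul_zero, add_zero, div_mul_cancel₀ z hb.ne'] at this

end IsAlphaLogConvexOn

theorem abs_trapezoid_sub_average_le_of_isAlphaLogConvexOn {f f' : ℝ → ℝ} {a b p q α : ℝ}
    {s : Set ℝ} (hab : a < b) (hpq : p.HolderConjugate q)
    (hderiv : ∀ x ∈ Icc a b, HasDerivAt f (f' x) x) (hint : IntervalIntegrable f' volume a b)
    (hα : α ≤ 1) (hconv : IsAlphaLogConvexOn α s fun x => |f' x| ^ q) (has : a ∈ s)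
    (hbs : b ∈ s) (ha0 : f' a ≠ 0) (hle : |f' a| ≤ |f' b|) :
    |(f a + f b) / 2 - (1 / (b - a)) * ∫ x in a..b, f x| ≤
      (b - a) * |f' b| * (2 / ((p + 1) * (p + 2))) ^ (1 / p) *
        (∫ t in (0 : ℝ)..1, exp (α * q * log (|f' a| / |f' b|) * t)) ^ (1 / q) := by
  set c := α * q * log (|f' a| / |f' b|)
  set J := ∫ t in (0 : ℝ)..1, exp (c * t)
  have hd : 0 < b - a := sub_pos.mpr hab
  have hq := hpq.symm.pos
  have hfa : 0 < |f' a| := abs_pos.mpr ha0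
  have hfb : 0 < |f' b| := hfa.trans_le hle
  have hpt : ∀ x ∈ Ioo a b, |f' x| ^ q ≤ |f' b| ^ q * exp (c * ((b - x) / (b - a))) := by
    intro x hx
    have := hconv.le_mul_exp hα has hbs (by positivity) (rpow_le_rpow hfa.le hle hq.le)
      (t := (b - x) / (b - a))
      ⟨div_nonneg (by linarith [hx.2]) hd.le, (div_le_one hd).2 (by linarith [hx.1])⟩
    rwa [show (b - x) / (b - a) * a + (1 - (b - x) / (b - a)) * b = x by field_simp; ring,
      ← div_rpow hfa.le hfb.le, log_rpow (by positivity), ← mul_assoc] at this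
  have hw : Continuous fun x => |f' b| ^ q * exp (c * ((b - x) / (b - a))) := by fun_prop
  have hJ : 0 ≤ J := integral_nonneg zero_le_one fun _ _ => (exp_pos _).le
  have hintw : ∫ x in a..b, |f' b| ^ q * exp (c * ((b - x) / (b - a)))
      = (b - a) * |f' b| ^ q * J := by
    rw [intervalIntegral.integral_const_mul,
      integral_comp_sub_div_sub (fun t => exp (c * t)) hab.ne]
    ring
  have hroot : (b - a) ^ (1 / p) * (b - a) ^ (1 / q) = b - a := by
    rw [← rpow_add hd, hpq.one_div_add_one_div, div_one, rpow_one]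
  have hp := hpq.pos
  have hC : 0 ≤ 2 / ((p + 1) * (p + 2)) := by positivity
  have hconst : (b - a) / (2 ^ p * (p + 1)) ≤ (b - a) * (2 / ((p + 1) * (p + 2))) := by
    rw [div_eq_mul_one_div (b - a)]
    exact mul_le_mul_of_nonneg_left (one_div_two_rpow_mul_le hp.le) hd.le
  calc |(f a + f b) / 2 - (1 / (b - a)) * ∫ x in a..b, f x|
      ≤ ((b - a) / (2 ^ p * (p + 1))) ^ (1 / p) * ((b - a) * |f' b| ^ q * J) ^ (1 / q) :=
        hintw ▸ abs_trapezoid_sub_average_le hab hpq hderiv hint (hw.intervalIntegrable a b) hpt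
    _ ≤ ((b - a) * (2 / ((p + 1) * (p + 2)))) ^ (1 / p)
          * ((b - a) * |f' b| ^ q * J) ^ (1 / q) := by
        gcongr
    _ = (b - a) * |f' b| * (2 / ((p + 1) * (p + 2))) ^ (1 / p) * J ^ (1 / q) := by
        rw [mul_rpow hd.le hC, mul_rpow (by positivity) hJ, mul_rpow hd.le (by positivity),
          ← rpow_mul hfb.le, mul_one_div_cancel hq.ne', rpow_one]
        linear_combination (|f' b| * (2 / ((p + 1) * (p + 2))) ^ (1 / p) * J ^ (1 / q)) * hroot

theorem stmt6_general
    (I : Set ℝ)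
    (hIci : Set.Ici (0:ℝ) ⊆ I)
    (f f' : ℝ → ℝ)
    (hderiv : ∀ x ∈ I, HasDerivAt f (f' x) x)
    (a b : ℝ) (ha : 0 ≤ a) (hab : a < b)
    (hint : IntervalIntegrable f' MeasureTheory.volume a b)
    (α : ℝ) (hα : α ∈ Set.Ioc (0:ℝ) 1)
    (p q : ℝ) (hp : 1 < p) (hpq : 1 / p + 1 / q = 1)
    (hconv : ∀ x ∈ Set.Icc (0:ℝ) (b), ∀ y ∈ Set.Icc (0:ℝ) (b), ∀ t ∈ Set.Icc (0:ℝ) 1,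
      |f' (t * x + (1 - t) * y)| ^ q ≤ (|f' (x)| ^ q) ^ (t ^ α) * (|f' (y)| ^ q) ^ (1 - t ^ α))
    (η : ℝ) (hη : η = |f' a| / |f' b|) :
    (η = 1 → |(f a + f b) / 2 - (1 / (b - a)) * ∫ x in a..b, f x| ≤ (b - a) * |f' b| * (2 / ((p + 1) * (p + 2))) ^ (1 / p)) ∧
    (η < 1 → |(f a + f b) / 2 - (1 / (b - a)) * ∫ x in a..b, f x| ≤ (b - a) * |f' b| * (2 / ((p + 1) * (p + 2))) ^ (1 / p) *
      ((η ^ (α * q) - 1) / (α * q * Real.log η)) ^ (1 / q)) := by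
  have hpq' : p.HolderConjugate q :=
    Real.holderConjugate_iff.mpr ⟨hp, by simpa only [one_div] using hpq⟩
  have hderiv' : ∀ x ∈ Icc a b, HasDerivAt f (f' x) x :=
    fun x hx => hderiv x (hIci (ha.trans hx.1))
  have hconv' : IsAlphaLogConvexOn α (Icc 0 b) fun x => |f' x| ^ q := hconv
  rcases (hη ▸ by positivity : 0 ≤ η).eq_or_lt with hη0 | hηpos
  · -- `η = 0`, possibly as the junk value `|f' a| / 0`: log-convexity forces `f' = 0` on
    -- `(a, b)`, and the right-hand side is `0` because `log 0 = 0`.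
    have hdeg : ∀ x ∈ Ioo a b, |f' x| ^ q ≤ 0 := by
      refine hconv'.le_zero_on_Ioo ha hab ?_
      rcases div_eq_zero_iff.mp (hη ▸ hη0.symm) with h0 | h0 <;>
        simp [h0, zero_rpow hpq'.symm.ne_zero]
    have := abs_trapezoid_sub_average_le hab hpq' hderiv' hint intervalIntegrable_const hdeg
    subst hη0
    refine ⟨fun h => absurd h zero_ne_one, fun _ => ?_⟩
    simpa [zero_rpow, hα.1.ne', hpq'.symm.ne_zero, hpq'.symm.one_div_ne_zero] using this
  · have hfb : f' b ≠ 0 := fun h => hηpos.ne' (by simp [hη, h])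
    have hfa : f' a ≠ 0 := fun h => hηpos.ne' (by simp [hη, h])
    have hbound (hη1 : η ≤ 1) := abs_trapezoid_sub_average_le_of_isAlphaLogConvexOn hab hpq'
      hderiv' hint hα.2 hconv' ⟨ha, hab.le⟩ ⟨ha.trans hab.le, le_rfl⟩ hfa
      (by rwa [hη, div_le_one (abs_pos.mpr hfb)] at hη1)
    rw [← hη] at hbound
    refine ⟨fun hη1 => ?_, fun hη1 => ?_⟩
    · simpa [hη1] using hbound hη1.le
    · have hc : α * q * log η ≠ 0 :=
        mul_ne_zero (mul_ne_zero hα.1.ne' hpq'.symm.ne_zero) (log_neg hηpos hη1).ne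
      have hexp : exp (α * q * log η) = η ^ (α * q) := by rw [rpow_def_of_pos hηpos, mul_comm]
      simpa only [integral_exp_mul_zero_one hc, hexp] using hbound hη1.le

theorem stmt6
    (I : Set ℝ) (hIopen : IsOpen I) (hIconn : Set.OrdConnected I)
    (hIci : Set.Ici (0:ℝ) ⊆ I)
    (f f' : ℝ → ℝ)
    (hfpos : ∀ x ∈ I, 0 < f x)
    (hderiv : ∀ x ∈ I, HasDerivAt f (f' x) x)
    (a b : ℝ) (ha : 0 ≤ a) (hab : a < b)
    (hint : IntervalIntegrable f' MeasureTheory.volume a b)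
    (α : ℝ) (hα : α ∈ Set.Ioc (0:ℝ) 1)
    (p q : ℝ) (hp : 1 < p) (hq : 1 < q) (hpq : 1 / p + 1 / q = 1)
    (hconv : ∀ x ∈ Set.Icc (0:ℝ) (b), ∀ y ∈ Set.Icc (0:ℝ) (b), ∀ t ∈ Set.Icc (0:ℝ) 1,
      |f' (t * x + (1 - t) * y)| ^ q ≤ (|f' (x)| ^ q) ^ (t ^ α) * (|f' (y)| ^ q) ^ (1 - t ^ α))
    (η : ℝ) (hη : η = |f' a| / |f' b|) :
    (η = 1 → |(f a + f b) / 2 - (1 / (b - a)) * ∫ x in a..b, f x| ≤ (b - a) * |f' b| * (2 / ((p + 1) * (p + 2))) ^ (1 / p)) ∧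
    (η < 1 → |(f a + f b) / 2 - (1 / (b - a)) * ∫ x in a..b, f x| ≤ (b - a) * |f' b| * (2 / ((p + 1) * (p + 2))) ^ (1 / p) *
      ((η ^ (α * q) - 1) / (α * q * Real.log η)) ^ (1 / q)) :=
  stmt6_general I hIci f f' hderiv a b ha hab hint α hα p q hp hpq hconv η hη
end
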